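/- arXiv:2506.03116 — 2 statements merged into one kernel-verified Lean document; each statement's English description precedes it below -/
import Mathlib

section
/- For every n ≥ 0, the map ψ : SYT(θ^(n)) → P_n, defined by ψ(T) = p_1 p_2 … p_{2n+2} with p_i = E if the entry i+2 of T lies in the arm, p_i = N if i+2 lies in the leg, p_i = S if i+2 lies in the heart and 2 lies in the arm, and p_i = W if i+2 lies in the heart and 2 lies in the leg, is injective. -/
/-- The four unit steps of a lattice path. -/
inductive Step : Type
  | N | S | E | W
  deriving DecidableEq

/-- The vector in `ℤ × ℤ` corresponding to a step. -/
def stepVec : Step → ℤ × ℤ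
  | Step.N => (0, 1)
  | Step.S => (0, -1)
  | Step.E => (1, 0)
  | Step.W => (-1, 0)

/-- The endpoint of the lattice path described by the word `w`, starting at the origin. -/
def endpt (w : List Step) : ℤ × ℤ := (w.map stepVec).sum

/-- `w` is a lattice path in `𝒫ₙ`: it has length `2n+2`, stays weakly in the first
quadrant, and ends at `(n, n)`. -/
def IsPath (n : ℕ) (w : List Step) : Prop :=
  w.length = 2 * n + 2 ∧
  (∀ k : ℕ, 0 ≤ (endpt (w.take k)).1 ∧ 0 ≤ (endpt (w.take k)).2) ∧
  endpt w = ((n : ℤ), (n : ℤ))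

/-- The cells of the Young diagram of `θ⁽ⁿ⁾ = (n+2, 2, 1ⁿ)`, in (row, column) matrix
coordinates, 0-indexed, English orientation. -/
def cells (n : ℕ) : Set (ℕ × ℕ) :=
  {c | (c.1 = 0 ∧ c.2 ≤ n + 1) ∨ c = (1, 1) ∨ (c.2 = 0 ∧ 1 ≤ c.1 ∧ c.1 ≤ n + 1)}

/-- `T` is a standard Young tableau of shape `θ⁽ⁿ⁾`: it is a bijective filling of the
cells with `1, …, 2n+4` (and `0` elsewhere), strictly increasing along rows and
down columns. -/
def IsSYT (n : ℕ) (T : ℕ × ℕ → ℕ) : Prop :=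
  (∀ c, c ∉ cells n → T c = 0) ∧
  Set.BijOn T (cells n) (Set.Icc 1 (2 * n + 4)) ∧
  (∀ c ∈ cells n, ∀ d ∈ cells n, c.1 = d.1 → c.2 < d.2 → T c < T d) ∧
  (∀ c ∈ cells n, ∀ d ∈ cells n, c.2 = d.2 → c.1 < d.1 → T c < T d)

/-- The value `m` appears in the arm (first row) of `T`. -/
def InArm (n : ℕ) (T : ℕ × ℕ → ℕ) (m : ℕ) : Prop := ∃ j ≤ n + 1, T (0, j) = m

/-- The value `m` appears in the leg (first column) of `T`. -/
def InLeg (n : ℕ) (T : ℕ × ℕ → ℕ) (m : ℕ) : Prop := ∃ i ≤ n + 1, T (i, 0) = m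

/-- The value `m` appears in the heart (the cell `(1,1)`) of `T`. -/
def InHeart (T : ℕ × ℕ → ℕ) (m : ℕ) : Prop := T (1, 1) = m

open Classical in
/-- The map ψ: the `i`-th letter (1-based, `i = k+1` for `k : Fin (2n+2)`) is determined by
the position of the entry `i+2` of `T`, and, if `i+2` is in the heart, by the position of `2`. -/
noncomputable def psi (n : ℕ) (T : ℕ × ℕ → ℕ) : List Step :=
  List.ofFn (fun k : Fin (2 * n + 2) =>
    if InArm n T (k.val + 3) then Step.E
    else if InLeg n T (k.val + 3) then Step.N
    else if InHeart T (k.val + 3) ∧ InArm n T 2 then Step.S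
    else Step.W)

/-! Rows and columns of a standard tableau increase, so a tableau of shape `θ⁽ⁿ⁾` is determined
by which values lie in its arm, its leg and its heart. The entry `1` always sits in the corner,
the word `ψ(T)` records the region of every entry `≥ 3`, and since the heart holds an entry `≥ 3`,
its letter (`S` or `W`) also tells whether `2` lies in the arm or in the leg. -/

open Set

theorem StrictMonoOn.eqOn_of_image_eq {β γ : Type*} [LinearOrder β] [WellFoundedLT β]
    [Preorder γ] {f g : β → γ} {s : Set β} (hf : StrictMonoOn f s) (hg : StrictMonoOn g s)
    (h : f '' s = g '' s) : EqOn f g s := fun x hx =>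
  congrFun ((hf.domRestrict.range_inj hg.domRestrict).1
    (by rwa [range_domRestrict, range_domRestrict])) ⟨x, hx⟩

section Cells

variable {n : ℕ}

lemma arm_mem_cells {j : ℕ} (hj : j ≤ n + 1) : ((0, j) : ℕ × ℕ) ∈ cells n :=
  Or.inl ⟨rfl, hj⟩

lemma leg_mem_cells {i : ℕ} (hi : i ≤ n + 1) : ((i, 0) : ℕ × ℕ) ∈ cells n := by
  rcases Nat.eq_zero_or_pos i with rfl | hi0
  · exact arm_mem_cells (Nat.zero_le _)
  · exact Or.inr (Or.inr ⟨rfl, hi0, hi⟩)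

lemma heart_mem_cells : ((1, 1) : ℕ × ℕ) ∈ cells n := Or.inr (Or.inl rfl)

end Cells

namespace IsSYT

variable {n : ℕ} {T : ℕ × ℕ → ℕ} (hT : IsSYT n T)
include hT

lemma arm_strictMonoOn : StrictMonoOn (fun j => T (0, j)) (Iic (n + 1)) :=
  fun _ ha _ hb hab => hT.2.2.1 _ (arm_mem_cells ha) _ (arm_mem_cells hb) rfl hab

lemma leg_strictMonoOn : StrictMonoOn (fun i => T (i, 0)) (Iic (n + 1)) :=
  fun _ ha _ hb hab => hT.2.2.2 _ (leg_mem_cells ha) _ (leg_mem_cells hb) rfl hab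

lemma corner_lt_arm_one : T (0, 0) < T (0, 1) :=
  hT.arm_strictMonoOn (by simp) (by simp) one_pos

lemma arm_one_lt_heart : T (0, 1) < T (1, 1) :=
  hT.2.2.2 _ (arm_mem_cells (by omega)) _ heart_mem_cells rfl one_pos

lemma corner_le {c : ℕ × ℕ} (hc : c ∈ cells n) : T (0, 0) ≤ T c := by
  obtain ⟨a, b⟩ := c
  rcases hc with ⟨rfl, hb⟩ | h | ⟨rfl, -, ha⟩
  · exact hT.arm_strictMonoOn.monotoneOn (by simp) hb (Nat.zero_le b)
  · rw [h]
    exact (hT.corner_lt_arm_one.trans hT.arm_one_lt_heart).le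
  · exact hT.leg_strictMonoOn.monotoneOn (by simp) ha (Nat.zero_le a)

lemma corner_eq_one : T (0, 0) = 1 := by
  obtain ⟨c, hc, hc1⟩ := hT.2.1.surjOn (show 1 ∈ Icc 1 (2 * n + 4) by simp)
  have hpos := (hT.2.1.mapsTo (arm_mem_cells (Nat.zero_le (n + 1)))).1
  have := hT.corner_le hc
  omega

lemma three_le_heart : 3 ≤ T (1, 1) := by
  have := hT.corner_lt_arm_one
  have := hT.arm_one_lt_heart
  have := hT.corner_eq_one
  omega

lemma heart_le : T (1, 1) ≤ 2 * n + 4 := (hT.2.1.mapsTo heart_mem_cells).2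

lemma inArm_one : InArm n T 1 := ⟨0, Nat.zero_le _, hT.corner_eq_one⟩

lemma inLeg_one : InLeg n T 1 := ⟨0, Nat.zero_le _, hT.corner_eq_one⟩

lemma mem_Icc_of_inArm {m : ℕ} : InArm n T m → m ∈ Icc 1 (2 * n + 4) :=
  fun ⟨_, hj, h⟩ => h ▸ hT.2.1.mapsTo (arm_mem_cells hj)

lemma mem_Icc_of_inLeg {m : ℕ} : InLeg n T m → m ∈ Icc 1 (2 * n + 4) :=
  fun ⟨_, hi, h⟩ => h ▸ hT.2.1.mapsTo (leg_mem_cells hi)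

lemma inArm_or_inLeg_or_inHeart {m : ℕ} (hm : m ∈ Icc 1 (2 * n + 4)) :
    InArm n T m ∨ InLeg n T m ∨ InHeart T m := by
  obtain ⟨⟨a, b⟩, hc, rfl⟩ := hT.2.1.surjOn hm
  rcases hc with ⟨rfl, hb⟩ | h | ⟨rfl, -, ha⟩
  · exact Or.inl ⟨b, hb, rfl⟩
  · exact Or.inr (Or.inr (congrArg T h).symm)
  · exact Or.inr (Or.inl ⟨a, ha, rfl⟩)

lemma not_inLeg_of_inArm {m : ℕ} (hm : 2 ≤ m) (hArm : InArm n T m) : ¬InLeg n T m := by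
  rintro ⟨i, hi, rfl⟩
  obtain ⟨j, hj, hji⟩ := hArm
  have hcell := hT.2.1.injOn (arm_mem_cells hj) (leg_mem_cells hi) hji
  simp only [Prod.mk.injEq] at hcell
  rw [← hcell.1, hT.corner_eq_one] at hm
  omega

lemma not_inArm_heart : ¬InArm n T (T (1, 1)) := fun ⟨_, hj, h⟩ => by
  simpa using hT.2.1.injOn (arm_mem_cells hj) heart_mem_cells h

lemma not_inLeg_heart : ¬InLeg n T (T (1, 1)) := fun ⟨_, hi, h⟩ => by
  simpa using hT.2.1.injOn (leg_mem_cells hi) heart_mem_cells h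

lemma inLeg_two_iff : InLeg n T 2 ↔ ¬InArm n T 2 := by
  refine ⟨fun hLeg hArm => hT.not_inLeg_of_inArm le_rfl hArm hLeg, fun hArm => ?_⟩
  rcases hT.inArm_or_inLeg_or_inHeart (m := 2) (by simp) with h | h | h
  · exact absurd h hArm
  · exact h
  · have := hT.three_le_heart
    rw [InHeart] at h
    omega

lemma eq_of_regions {T' : ℕ × ℕ → ℕ} (hT' : IsSYT n T')
    (hArm : ∀ m ∈ Icc 1 (2 * n + 4), InArm n T m ↔ InArm n T' m)
    (hLeg : ∀ m ∈ Icc 1 (2 * n + 4), InLeg n T m ↔ InLeg n T' m)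
    (hHeart : T (1, 1) = T' (1, 1)) : T = T' := by
  have hArmEq : EqOn (fun j => T (0, j)) (fun j => T' (0, j)) (Iic (n + 1)) :=
    hT.arm_strictMonoOn.eqOn_of_image_eq hT'.arm_strictMonoOn <| ext fun m =>
      ⟨fun h => (hArm m (hT.mem_Icc_of_inArm h)).1 h,
        fun h => (hArm m (hT'.mem_Icc_of_inArm h)).2 h⟩
  have hLegEq : EqOn (fun i => T (i, 0)) (fun i => T' (i, 0)) (Iic (n + 1)) :=
    hT.leg_strictMonoOn.eqOn_of_image_eq hT'.leg_strictMonoOn <| ext fun m =>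
      ⟨fun h => (hLeg m (hT.mem_Icc_of_inLeg h)).1 h,
        fun h => (hLeg m (hT'.mem_Icc_of_inLeg h)).2 h⟩
  funext c
  by_cases hc : c ∈ cells n
  · obtain ⟨a, b⟩ := c
    rcases hc with ⟨rfl, hb⟩ | h | ⟨rfl, -, ha⟩
    · exact hArmEq hb
    · rwa [h]
    · exact hLegEq ha
  · rw [hT.1 c hc, hT'.1 c hc]

end IsSYT

open Classical in
/-- The letter that `ψ(T)` writes for the entry `m`, i.e. at position `m - 2`. -/
noncomputable def psiLetter (n : ℕ) (T : ℕ × ℕ → ℕ) (m : ℕ) : Step :=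
  if InArm n T m then Step.E
  else if InLeg n T m then Step.N
  else if InHeart T m ∧ InArm n T 2 then Step.S
  else Step.W

lemma psi_eq_ofFn_psiLetter (n : ℕ) (T : ℕ × ℕ → ℕ) :
    psi n T = List.ofFn fun k : Fin (2 * n + 2) => psiLetter n T (k.val + 3) := rfl

lemma psiLetter_eq_E_iff {n : ℕ} {T : ℕ × ℕ → ℕ} {m : ℕ} :
    psiLetter n T m = Step.E ↔ InArm n T m := by
  unfold psiLetter
  split_ifs <;> simp_all

namespace IsSYT

variable {n : ℕ} {T : ℕ × ℕ → ℕ} (hT : IsSYT n T)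
include hT

lemma psiLetter_eq_N_iff {m : ℕ} (hm : 2 ≤ m) : psiLetter n T m = Step.N ↔ InLeg n T m := by
  unfold psiLetter
  split_ifs with hArm <;> simp_all [hT.not_inLeg_of_inArm hm]

lemma psiLetter_heart_ne_E : psiLetter n T (T (1, 1)) ≠ Step.E :=
  psiLetter_eq_E_iff.not.2 hT.not_inArm_heart

lemma psiLetter_heart_ne_N : psiLetter n T (T (1, 1)) ≠ Step.N :=
  (hT.psiLetter_eq_N_iff (by linarith [hT.three_le_heart])).not.2 hT.not_inLeg_heart

lemma psiLetter_heart_eq_S_iff : psiLetter n T (T (1, 1)) = Step.S ↔ InArm n T 2 := by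
  rw [psiLetter, if_neg hT.not_inArm_heart, if_neg hT.not_inLeg_heart]
  split_ifs <;> simp_all [InHeart]

lemma heart_eq_of_psiLetter {m : ℕ} (hm : m ∈ Icc 1 (2 * n + 4))
    (hE : psiLetter n T m ≠ Step.E) (hN : psiLetter n T m ≠ Step.N) : T (1, 1) = m := by
  rw [Ne, psiLetter_eq_E_iff] at hE
  rcases hT.inArm_or_inLeg_or_inHeart hm with h | h | h
  · exact absurd h hE
  · exact absurd (by simp [psiLetter, hE, h]) hN
  · exact h

end IsSYT

section PsiEq

variable {n : ℕ} {T T' : ℕ × ℕ → ℕ}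

lemma psiLetter_eq_of_psi_eq (hψ : psi n T = psi n T') {m : ℕ} (hm : m ∈ Icc 3 (2 * n + 4)) :
    psiLetter n T m = psiLetter n T' m := by
  rw [psi_eq_ofFn_psiLetter, psi_eq_ofFn_psiLetter, List.ofFn_inj] at hψ
  obtain ⟨h3, hm⟩ := hm
  simpa [Nat.sub_add_cancel h3] using congrFun hψ ⟨m - 3, by omega⟩

variable (hT : IsSYT n T) (hT' : IsSYT n T') (hψ : psi n T = psi n T')
include hT hT' hψ

lemma heart_eq_of_psi_eq : T (1, 1) = T' (1, 1) := by
  have hm : T (1, 1) ∈ Icc 3 (2 * n + 4) := ⟨hT.three_le_heart, hT.heart_le⟩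
  have h := psiLetter_eq_of_psi_eq hψ hm
  exact (hT'.heart_eq_of_psiLetter (Icc_subset_Icc (by norm_num) le_rfl hm)
    (h ▸ hT.psiLetter_heart_ne_E) (h ▸ hT.psiLetter_heart_ne_N)).symm

lemma inArm_two_iff_of_psi_eq : InArm n T 2 ↔ InArm n T' 2 := by
  rw [← hT.psiLetter_heart_eq_S_iff, ← hT'.psiLetter_heart_eq_S_iff,
    ← heart_eq_of_psi_eq hT hT' hψ, psiLetter_eq_of_psi_eq hψ ⟨hT.three_le_heart, hT.heart_le⟩]

lemma inArm_iff_of_psi_eq {m : ℕ} (hm : m ∈ Icc 1 (2 * n + 4)) :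
    InArm n T m ↔ InArm n T' m := by
  obtain ⟨h1, hm⟩ := hm
  obtain rfl | rfl | h3 : m = 1 ∨ m = 2 ∨ 3 ≤ m := by omega
  · exact iff_of_true hT.inArm_one hT'.inArm_one
  · exact inArm_two_iff_of_psi_eq hT hT' hψ
  · rw [← psiLetter_eq_E_iff, ← psiLetter_eq_E_iff, psiLetter_eq_of_psi_eq hψ ⟨h3, hm⟩]

lemma inLeg_iff_of_psi_eq {m : ℕ} (hm : m ∈ Icc 1 (2 * n + 4)) :
    InLeg n T m ↔ InLeg n T' m := by
  obtain ⟨h1, hm⟩ := hm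
  obtain rfl | rfl | h3 : m = 1 ∨ m = 2 ∨ 3 ≤ m := by omega
  · exact iff_of_true hT.inLeg_one hT'.inLeg_one
  · rw [hT.inLeg_two_iff, hT'.inLeg_two_iff, inArm_two_iff_of_psi_eq hT hT' hψ]
  · rw [← hT.psiLetter_eq_N_iff (by omega), ← hT'.psiLetter_eq_N_iff (by omega),
      psiLetter_eq_of_psi_eq hψ ⟨h3, hm⟩]

end PsiEq

/-- The map `ψ : SYT(θ⁽ⁿ⁾) → 𝒫ₙ` is injective. -/
theorem psi_injective (n : ℕ) :
    Set.InjOn (psi n) {T : ℕ × ℕ → ℕ | IsSYT n T} := fun _ hT _ hT' hψ =>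
  hT.eq_of_regions hT' (fun _ hm => inArm_iff_of_psi_eq hT hT' hψ hm)
    (fun _ hm => inLeg_iff_of_psi_eq hT hT' hψ hm) (heart_eq_of_psi_eq hT hT' hψ)
end

section
/- For every n ≥ 0, the number of lattice paths in P_n equals C(2n,n)·(4n+4)(2n+1)/(n+2), where C(2n,n) is the central binomial coefficient. -/
open Finset

namespace Step

def swap : Step → Step
  | N => E
  | E => N
  | S => W
  | W => S

lemma swap_involutive : Function.Involutive swap := fun a => by cases a <;> rfl

lemma stepVec_swap (a : Step) : stepVec a.swap = (stepVec a).swap := by cases a <;> rfl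

end Step

lemma List.count_eq_sum_map_ite {α : Type*} [DecidableEq α] (l : List α) (a : α) :
    l.count a = (l.map fun x => if x = a then 1 else 0).sum := by
  induction l with
  | nil => rfl
  | cons x l ih => by_cases h : x = a <;> simp [h, ih, add_comm]

lemma List.exists_ofFn_eq {α : Type*} {l : List α} {m : ℕ} (h : l.length = m) :
    ∃ f : Fin m → α, List.ofFn f = l := by
  subst h
  exact ⟨_, List.ofFn_getElem⟩

lemma List.count_take_ofFn {α : Type*} [DecidableEq α] {m : ℕ} (f : Fin m → α) (a : α)
    (k : ℕ) : ((List.ofFn f).take k).count a = #{i | f i = a ∧ i.val < k} := by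
  rw [List.count_eq_sum_map_ite, List.map_take, List.map_ofFn, List.sum_take_ofFn,
    Finset.sum_filter, Finset.card_filter]
  exact Finset.sum_congr rfl fun i _ => by by_cases h : f i = a <;> simp [h]

lemma List.count_ofFn {α : Type*} [DecidableEq α] {m : ℕ} (f : Fin m → α) (a : α) :
    (List.ofFn f).count a = #{i | f i = a} := by
  simpa [List.take_of_length_le] using List.count_take_ofFn f a m

lemma endpt_eq_counts (w : List Step) :
    endpt w =
      ((w.count Step.E : ℤ) - w.count Step.W, (w.count Step.N : ℤ) - w.count Step.S) := by
  induction w with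
  | nil => rfl
  | cons a w ih =>
    rw [endpt, List.map_cons, List.sum_cons, ← endpt, ih]
    cases a <;> simp [stepVec] <;> ring

lemma length_eq_counts (w : List Step) :
    w.length = w.count Step.E + w.count Step.W + w.count Step.N + w.count Step.S := by
  induction w with
  | nil => rfl
  | cons a w ih => cases a <;> simp [ih] <;> omega

lemma endpt_map_swap (w : List Step) : endpt (w.map Step.swap) = (endpt w).swap := by
  simp only [endpt, List.map_map, Function.comp_def, Step.stepVec_swap]
  induction w with
  | nil => rfl
  | cons a w ih => simp [ih]

lemma count_map_swap (w : List Step) (a : Step) :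
    (w.map Step.swap).count a = w.count a.swap := by
  conv_lhs => rw [← Step.swap_involutive a]
  exact List.count_map_of_injective _ _ Step.swap_involutive.injective _

lemma isPath_map_swap_iff {n : ℕ} {w : List Step} :
    IsPath n (w.map Step.swap) ↔ IsPath n w := by
  simp only [IsPath, List.length_map, ← List.map_take, endpt_map_swap, Prod.fst_swap,
    Prod.snd_swap, Prod.swap_eq_iff_eq_swap, Prod.swap_prod_mk]
  exact and_congr_right fun _ => and_congr_left fun _ => forall_congr' fun _ => and_comm

lemma IsPath.count_W_add_count_S {n : ℕ} {w : List Step} (h : IsPath n w) :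
    w.count Step.W + w.count Step.S = 1 := by
  obtain ⟨hlen, -, hend⟩ := h
  rw [endpt_eq_counts, Prod.ext_iff] at hend
  have := length_eq_counts w
  simp only at hend
  omega

def IsWestWord (j r : ℕ) (w : List Step) : Prop :=
  w.length = j + r ∧ w.count Step.N = j ∧ w.count Step.W = 1 ∧ w.count Step.S = 0 ∧
    ∀ k, (w.take k).count Step.W ≤ (w.take k).count Step.E

lemma isPath_and_count_S_eq_zero_iff {n : ℕ} {w : List Step} :
    IsPath n w ∧ w.count Step.S = 0 ↔ IsWestWord n (n + 2) w := by
  have hcounts := length_eq_counts w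
  constructor
  · rintro ⟨⟨hlen, hpre, hend⟩, hS⟩
    rw [endpt_eq_counts, Prod.ext_iff] at hend
    simp only at hend
    refine ⟨by omega, by omega, by omega, hS, fun k => ?_⟩
    have := (hpre k).1
    rw [endpt_eq_counts] at this
    simp only at this
    omega
  · rintro ⟨hlen, hN, hW, hS, hpre⟩
    refine ⟨⟨by omega, fun k => ?_, ?_⟩, hS⟩
    · have hWk := hpre k
      have hSk := ((List.take_sublist k w).count_le Step.S).trans_eq hS
      rw [endpt_eq_counts]
      constructor <;> simp only <;> omega
    · rw [endpt_eq_counts, Prod.ext_iff]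
      constructor <;> simp only <;> omega

lemma Finset.card_filter_exists_lt {α : Type*} [LinearOrder α] {V : Finset α}
    (hV : V.Nonempty) : #{p ∈ V | ∃ e ∈ V, e < p} = #V - 1 := by
  have : {p ∈ V | ∃ e ∈ V, e < p} = V.erase (V.min' hV) := by
    ext p
    simp only [mem_filter, mem_erase]
    constructor
    · rintro ⟨hp, e, he, hep⟩
      exact ⟨((V.min'_le e he).trans_lt hep).ne', hp⟩
    · rintro ⟨hne, hp⟩
      exact ⟨hp, _, V.min'_mem hV, (V.min'_le p hp).lt_of_ne hne.symm⟩
  rw [this, card_erase_of_mem (V.min'_mem hV)]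

section WestWords

variable {m : ℕ}

abbrev WestCode (m : ℕ) : Type := Σ _ : Finset (Fin m), Fin m

/-- The letters of the word coded by the set `V` of its non-north positions and the
position `p ∈ V` of its west step. -/
def westLetter (V : Finset (Fin m)) (p i : Fin m) : Step :=
  if i = p then Step.W else if i ∈ V then Step.E else Step.N

lemma westLetter_eq_W_iff {V : Finset (Fin m)} {p i : Fin m} :
    westLetter V p i = Step.W ↔ i = p := by
  unfold westLetter; split_ifs <;> simp_all

lemma westLetter_eq_E_iff {V : Finset (Fin m)} {p i : Fin m} :
    westLetter V p i = Step.E ↔ i ≠ p ∧ i ∈ V := by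
  unfold westLetter; split_ifs <;> simp_all

lemma westLetter_eq_N_iff {V : Finset (Fin m)} {p i : Fin m} (hp : p ∈ V) :
    westLetter V p i = Step.N ↔ i ∉ V := by
  unfold westLetter; split_ifs <;> simp_all

lemma westLetter_ne_S (V : Finset (Fin m)) (p i : Fin m) : westLetter V p i ≠ Step.S := by
  unfold westLetter; split_ifs <;> simp

def westWord (x : WestCode m) : List Step := List.ofFn (westLetter x.1 x.2)

def westCodes (m r : ℕ) : Finset (WestCode m) :=
  (powersetCard r univ).sigma fun V => {p ∈ V | ∃ e ∈ V, e < p}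

lemma card_westCodes (m r : ℕ) : #(westCodes m r) = m.choose r * (r - 1) := by
  rw [westCodes, card_sigma]
  have hfiber : ∀ V ∈ powersetCard r (univ : Finset (Fin m)),
      #{p ∈ V | ∃ e ∈ V, e < p} = r - 1 := by
    intro V hV
    rw [mem_powersetCard_univ] at hV
    rcases V.eq_empty_or_nonempty with rfl | hne
    · simp [← hV]
    · rw [← hV]
      convert card_filter_exists_lt hne
  rw [sum_congr rfl hfiber, sum_const, card_powersetCard, card_univ, Fintype.card_fin,
    smul_eq_mul]

lemma mk_mem_westCodes {r : ℕ} {V : Finset (Fin m)} {p : Fin m} :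
    ⟨V, p⟩ ∈ westCodes m r ↔ #V = r ∧ p ∈ V ∧ ∃ e ∈ V, e < p := by
  simp [westCodes, mem_sigma]

lemma isWestWord_westWord {j r : ℕ} {x : WestCode (j + r)}
    (hx : x ∈ westCodes (j + r) r) : IsWestWord j r (westWord x) := by
  obtain ⟨V, p⟩ := x
  simp only [mk_mem_westCodes] at hx
  obtain ⟨hV, hp, e, he, hep⟩ := hx
  simp only [IsWestWord, westWord, List.length_ofFn, List.count_take_ofFn, List.count_ofFn,
    westLetter_eq_W_iff, westLetter_eq_E_iff, westLetter_eq_N_iff hp, westLetter_ne_S,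
    filter_false, card_empty, filter_eq', mem_univ, if_true, card_singleton, true_and]
  refine ⟨?_, fun k => card_le_card_of_injOn (fun _ => e) ?_ ?_⟩
  · rw [filter_not, filter_mem_eq_inter, univ_inter, card_sdiff_of_subset (subset_univ V),
      card_univ, Fintype.card_fin, hV, Nat.add_sub_cancel]
  · intro i hi
    simp only [mem_coe, mem_filter, mem_univ, true_and] at hi ⊢
    obtain ⟨rfl, hik⟩ := hi
    exact ⟨⟨hep.ne, he⟩, by omega⟩
  · intro i hi i' hi' _
    simp only [mem_coe, mem_filter, mem_univ, true_and] at hi hi'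
    exact hi.1.trans hi'.1.symm

lemma injOn_westWord (r : ℕ) : Set.InjOn westWord (westCodes m r : Set (WestCode m)) := by
  rintro ⟨V, p⟩ hx ⟨V', p'⟩ hx' h
  simp only [mem_coe, mk_mem_westCodes] at hx hx'
  have hletter : westLetter V p = westLetter V' p' := List.ofFn_injective h
  obtain rfl : p = p' := westLetter_eq_W_iff.mp (hletter ▸ westLetter_eq_W_iff.mpr rfl)
  obtain rfl : V = V' := by
    ext i
    rw [← not_iff_not, ← westLetter_eq_N_iff hx.2.1, ← westLetter_eq_N_iff hx'.2.1, hletter]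
  rfl

lemma IsWestWord.exists_westWord_eq {j r : ℕ} {w : List Step} (h : IsWestWord j r w) :
    ∃ x ∈ westCodes (j + r) r, westWord x = w := by
  obtain ⟨hlen, hN, hW, hS, hpre⟩ := h
  obtain ⟨f, rfl⟩ := List.exists_ofFn_eq hlen
  simp only [List.count_ofFn, List.count_take_ofFn] at hN hW hS hpre
  obtain ⟨p, hp⟩ := card_eq_one.mp hW
  have hW_iff : ∀ i, f i = Step.W ↔ i = p := fun i => by
    simpa using congrArg (i ∈ ·) hp
  have hS_ne : ∀ i, f i ≠ Step.S := fun i =>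
    filter_eq_empty_iff.mp (card_eq_zero.mp hS) (mem_univ i)
  obtain ⟨e, he⟩ : ({i | f i = Step.E ∧ i.val < p.val + 1} : Finset _).Nonempty := by
    rw [← card_pos]
    refine (card_pos.mpr ⟨p, ?_⟩).trans_le (hpre (p.val + 1))
    simp [(hW_iff p).mpr rfl]
  simp only [mem_filter, mem_univ, true_and] at he
  have hep : e < p := by
    have : e ≠ p := fun hep => by simp [hep, (hW_iff p).mpr rfl] at he
    exact lt_of_le_of_ne (by omega) this
  refine ⟨⟨univ.filter (f · ≠ Step.N), p⟩,
    mk_mem_westCodes.mpr ⟨?_, ?_, e, ?_, hep⟩, ?_⟩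
  · have := card_filter_add_card_filter_not (s := univ) (fun i => f i = Step.N)
    simp only [card_univ, Fintype.card_fin, hN] at this
    simp only [ne_eq]
    omega
  · simp [(hW_iff p).mpr rfl]
  · simp [he.1]
  · refine congrArg List.ofFn (funext fun i => ?_)
    unfold westLetter
    split_ifs with hip hiN
    · exact ((hW_iff i).mpr hip).symm
    · cases hfi : f i <;> simp_all
    · exact (by simpa using hiN : f i = Step.N).symm

lemma setOf_isWestWord_eq_image (j r : ℕ) :
    {w | IsWestWord j r w} = westWord '' (westCodes (j + r) r : Set (WestCode (j + r))) := by
  ext w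
  exact ⟨fun h => h.exists_westWord_eq, fun ⟨x, hx, hxw⟩ => hxw ▸ isWestWord_westWord hx⟩

lemma ncard_isWestWord (j r : ℕ) :
    {w | IsWestWord j r w}.ncard = (j + r).choose r * (r - 1) := by
  rw [setOf_isWestWord_eq_image, (injOn_westWord r).ncard_image, Set.ncard_coe_finset,
    card_westCodes]

end WestWords

lemma ncard_isPath (n : ℕ) :
    {w | IsPath n w}.ncard = 2 * ((2 * n + 2).choose (n + 2) * (n + 1)) := by
  set A := {w | IsPath n w ∧ w.count Step.S = 0}
  have hA : A = {w | IsWestWord n (n + 2) w} := Set.ext fun _ => isPath_and_count_S_eq_zero_iff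
  have hA_finite : A.Finite := by
    rw [hA, setOf_isWestWord_eq_image]
    exact (finite_toSet _).image _
  have hswap : {w | IsPath n w ∧ w.count Step.W = 0} = List.map Step.swap '' A := by
    rw [Set.image_eq_preimage_of_inverse Step.swap_involutive.list_map
      Step.swap_involutive.list_map]
    ext w
    simp only [A, Set.mem_preimage, Set.mem_ofPred_eq, isPath_map_swap_iff, count_map_swap,
      Step.swap]
  have hunion : {w | IsPath n w} = A ∪ {w | IsPath n w ∧ w.count Step.W = 0} := by
    ext w
    simp only [A, Set.mem_union, Set.mem_ofPred_eq, ← and_or_left]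
    exact ⟨fun h => ⟨h, by have := h.count_W_add_count_S; omega⟩, And.left⟩
  have hdisj : Disjoint A {w | IsPath n w ∧ w.count Step.W = 0} :=
    Set.disjoint_left.mpr fun w ⟨hw, hS⟩ ⟨_, hW⟩ => by
      have := hw.count_W_add_count_S
      omega
  rw [hunion, Set.ncard_union_eq hdisj hA_finite (hswap ▸ hA_finite.image _), hswap,
    Set.ncard_image_of_injective _ Step.swap_involutive.list_map.injective, hA,
    ncard_isWestWord, show n + (n + 2) = 2 * n + 2 by ring, show n + 2 - 1 = n + 1 by rfl]
  ring

lemma choose_two_mul_add_two_mul (n : ℕ) :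
    (2 * n + 2).choose (n + 2) * ((n + 1) * (n + 2)) =
      (2 * n).choose n * ((2 * n + 1) * (2 * n + 2)) :=
  calc (2 * n + 2).choose (n + 2) * ((n + 1) * (n + 2))
      = (2 * n + 2) * (2 * n + 1).choose (n + 1) * (n + 1) := by
        rw [Nat.add_one_mul_choose_eq (2 * n + 1) (n + 1)]; ring
    _ = (2 * n).choose n * ((2 * n + 1) * (2 * n + 2)) := by
        rw [mul_assoc, ← Nat.add_one_mul_choose_eq (2 * n) n]; ring

/-- The number of lattice paths in `𝒫ₙ` is
`C(2n,n) · (4n+4)(2n+1) / (n+2)`. -/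
theorem card_paths (n : ℕ) :
    ({w : List Step | IsPath n w}.ncard : ℚ) =
      (Nat.choose (2 * n) n : ℚ) * ((4 * n + 4) * (2 * n + 1)) / (n + 2) := by
  rw [ncard_isPath, eq_div_iff (by positivity)]
  have := congrArg (fun k : ℕ => (2 * k : ℚ)) (choose_two_mul_add_two_mul n)
  push_cast at this ⊢
  linear_combination this
end
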